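/- Let a_1,…,a_m, B, K be positive integers with ∑ a_i ≤ B·K, set N = B·K, M = ∑_{i=1}^{m}(a_i − 1), and p_i = a_1 + … + a_i (p_0 = 0). Define a virtual line on vertices 1,…,N where the edge {j, j+1} has demand w_j = 1 if j and j+1 lie in the same element section (there exists i with p_{i−1} + 1 ≤ j and j + 1 ≤ p_{i−1} + a_i) and w_j = 0 otherwise; define a physical line on vertices 1,…,N where the edge {k, k+1} has capacity 0 if B divides k and capacity M otherwise. Then the indices {1,…,m} can be partitioned into K subsets each with ∑ a_i at most B if and only if there exists a bijection f : {1,…,N} → {1,…,N} such that for every k ∈ {1,…,N−1}, ∑ of w_j over all j with min(f(j), f(j+1)) ≤ k < max(f(j), f(j+1)) is at most the capacity of the edge {k, k+1}. (This establishes that cVNE of a linear virtual network on a linear physical network is NP-complete.) -/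

import Mathlib

/-!
Place item `i` as the section `(p_{i-1}, p_i]` of the virtual line, and cut the physical line
into `K` blocks of `B` consecutive vertices at the zero-capacity edges `k ∈ B ℕ`. An edge of
positive demand can never be stretched across such an edge, so every section is embedded inside
a single block; assigning each item to the block of its section is then a packing, because the
embedding is injective and a block has only `B` vertices. Conversely, a packing lays the items
of each bin side by side inside its block: the demand edges then join consecutive vertices of a
block and cross no block boundary, while any other physical edge carries at most the total
demand `∑ (a_i - 1)`. Finally the partial embedding is extended to a bijection of `[1, B K]`.
-/

open Classical Finset

theorem Set.InjOn.exists_bijOn_extend {α : Type*} {F : α → α} {s A : Set α} (hF : InjOn F A)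
    (hs : s.Finite) (hA : A ⊆ s) (hmaps : MapsTo F A s) : ∃ f, BijOn f s s ∧ EqOn f F A := by
  obtain hα | hα := isEmpty_or_nonempty α
  · exact ⟨F, by simp [Set.eq_empty_of_isEmpty s], fun _ _ => rfl⟩
  have hFA : F '' A ⊆ s := image_subset_iff.2 hmaps
  have hcard : (s \ A).encard = (s \ F '' A).encard := by
    rw [encard_sdiff hA (hs.subset hA), encard_sdiff hFA ((hs.subset hA).image F), hF.encard_image]
  obtain ⟨e, he⟩ := hs.sdiff.exists_bijOn_of_encard_eq hcard
  have heqF : EqOn (A.piecewise F e) F A := piecewise_eqOn _ _ _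
  have heqe : EqOn (A.piecewise F e) e (s \ A) := (A.piecewise_eqOn_compl F e).mono fun _ hx => hx.2
  have hinj : InjOn (A.piecewise F e) (A ∪ s \ A) := by
    refine (injOn_union disjoint_sdiff_right).2 ⟨hF.congr heqF.symm, he.injOn.congr heqe.symm, ?_⟩
    intro x hx y hy hxy
    rw [heqF hx, heqe hy] at hxy
    exact (he.mapsTo hy).2 (hxy ▸ mem_image_of_mem F hx)
  have hbij := (hF.bijOn_image.congr heqF.symm).union (he.congr heqe.symm) hinj
  rw [union_sdiff_cancel hA, union_sdiff_cancel hFA] at hbij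
  exact ⟨_, hbij, heqF⟩

def lineLoad (n : ℕ) (w f : ℕ → ℕ) (k : ℕ) : ℕ :=
  ∑ j ∈ Icc 1 (n - 1), if min (f j) (f (j + 1)) ≤ k ∧ k < max (f j) (f (j + 1)) then w j else 0

section LineLoad

variable {n : ℕ} {w f : ℕ → ℕ} {k : ℕ}

theorem lineLoad_le_sum : lineLoad n w f k ≤ ∑ j ∈ Icc 1 (n - 1), w j :=
  sum_le_sum fun j _ => by split_ifs <;> simp

theorem lineLoad_eq_zero_iff :
    lineLoad n w f k = 0 ↔ ∀ j ∈ Icc 1 (n - 1), w j ≠ 0 →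
      ¬(min (f j) (f (j + 1)) ≤ k ∧ k < max (f j) (f (j + 1))) := by
  simp only [lineLoad, sum_eq_zero_iff, ite_eq_right_iff]
  exact forall₂_congr fun _ _ => not_imp_not.symm

end LineLoad

section Blocks

variable {B : ℕ}

theorem exists_dvd_of_pred_div_lt {u v : ℕ} (hu : 1 ≤ u) (h : (u - 1) / B < (v - 1) / B) :
    ∃ k, B ∣ k ∧ u ≤ k ∧ k < v := by
  have hB : 0 < B := Nat.pos_of_ne_zero fun hB => by simp [hB] at h
  have hlow : u - 1 < ((u - 1) / B + 1) * B := by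
    rw [mul_comm]
    exact Nat.lt_mul_div_succ (u - 1) hB
  have hhigh : ((u - 1) / B + 1) * B ≤ v - 1 := (Nat.le_div_iff_mul_le hB).1 h
  exact ⟨((u - 1) / B + 1) * B, dvd_mul_left B _, by omega, by omega⟩

theorem mem_Ioc_of_pred_div_eq (hB : 0 < B) {x c : ℕ} (hx : 1 ≤ x) (h : (x - 1) / B = c) :
    x ∈ Ioc (c * B) (c * B + B) := by
  rw [Nat.div_eq_iff hB] at h
  rw [mem_Ioc]
  omega

theorem disjoint_Ioc_mul {b b' : ℕ} (h : b ≠ b') :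
    Disjoint (Ioc (b * B) (b * B + B)) (Ioc (b' * B) (b' * B + B)) := by
  rcases h.lt_or_gt with h | h
  · exact Ioc_disjoint_Ioc_of_le (by nlinarith)
  · exact (Ioc_disjoint_Ioc_of_le (by nlinarith)).symm

theorem pred_div_eq_of_lineLoad_eq_zero {n : ℕ} {w f : ℕ → ℕ}
    (hcut : ∀ k ∈ Icc 1 (n - 1), B ∣ k → lineLoad n w f k = 0) {j : ℕ} (hj : j ∈ Icc 1 (n - 1))
    (hw : w j ≠ 0) (hf : f j ∈ Set.Icc 1 n) (hf' : f (j + 1) ∈ Set.Icc 1 n) :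
    (f j - 1) / B = (f (j + 1) - 1) / B := by
  rw [Set.mem_Icc] at hf hf'
  by_contra hne
  obtain ⟨k, hBk, hk⟩ : ∃ k, B ∣ k ∧ min (f j) (f (j + 1)) ≤ k ∧ k < max (f j) (f (j + 1)) := by
    rcases lt_or_gt_of_ne hne with h | h
    · obtain ⟨k, hBk, hk, hk'⟩ := exists_dvd_of_pred_div_lt hf.1 h
      exact ⟨k, hBk, min_le_of_left_le hk, lt_max_of_lt_right hk'⟩
    · obtain ⟨k, hBk, hk, hk'⟩ := exists_dvd_of_pred_div_lt hf'.1 h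
      exact ⟨k, hBk, min_le_of_right_le hk, lt_max_of_lt_left hk'⟩
  have hkn : k ∈ Icc 1 (n - 1) := by
    rw [mem_Icc]
    omega
  exact lineLoad_eq_zero_iff.1 (hcut k hkn hBk) j hj hw hk

end Blocks

def prefixSum (a : ℕ → ℕ) (i : ℕ) : ℕ := ∑ l ∈ Icc 1 i, a l

def itemSection (a : ℕ → ℕ) (i : ℕ) : Finset ℕ := Ioc (prefixSum a (i - 1)) (prefixSum a i)

noncomputable def sectionDemand (a : ℕ → ℕ) (m j : ℕ) : ℕ :=
  if ∃ i ∈ Icc 1 m, prefixSum a (i - 1) + 1 ≤ j ∧ j + 1 ≤ prefixSum a (i - 1) + a i then 1 else 0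

section Sections

variable (a : ℕ → ℕ)

theorem prefixSum_mono : Monotone (prefixSum a) := fun _ _ h =>
  sum_le_sum_of_subset (Icc_subset_Icc_right h)

theorem prefixSum_pred_add {i : ℕ} (hi : 1 ≤ i) : prefixSum a (i - 1) + a i = prefixSum a i := by
  obtain ⟨i, rfl⟩ := Nat.exists_eq_add_of_le' hi
  exact (sum_Icc_succ_top (by omega) a).symm

variable {a}

theorem card_itemSection {i : ℕ} (hi : 1 ≤ i) : #(itemSection a i) = a i := by
  rw [itemSection, Nat.card_Ioc, ← prefixSum_pred_add a hi, Nat.add_sub_cancel_left]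

theorem itemSection_subset {i m : ℕ} (hi : i ≤ m) : itemSection a i ⊆ Ioc 0 (prefixSum a m) :=
  Ioc_subset_Ioc (Nat.zero_le _) (prefixSum_mono a hi)

theorem coe_itemSection_subset_Icc {i m N : ℕ} (hi : i ≤ m) (hN : prefixSum a m ≤ N) :
    (itemSection a i : Set ℕ) ⊆ Set.Icc 1 N := fun j hj => by
  have := itemSection_subset hi hj
  rw [mem_Ioc] at this
  exact ⟨this.1, this.2.trans hN⟩

theorem mem_itemSection_succ_iff {i j : ℕ} (hi : 1 ≤ i) :
    j ∈ itemSection a i ∧ j + 1 ∈ itemSection a i ↔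
      prefixSum a (i - 1) + 1 ≤ j ∧ j + 1 ≤ prefixSum a (i - 1) + a i := by
  rw [prefixSum_pred_add a hi, itemSection, mem_Ioc, mem_Ioc]
  omega

theorem disjoint_itemSection {i i' : ℕ} (h : i < i') :
    Disjoint (itemSection a i) (itemSection a i') := by
  have := prefixSum_mono a (Nat.le_sub_one_of_lt h)
  rw [itemSection, itemSection, disjoint_left]
  intro j hj hj'
  rw [mem_Ioc] at hj hj'
  omega

theorem pairwiseDisjoint_itemSection (s : Set ℕ) : s.PairwiseDisjoint (itemSection a) := by
  intro i _ i' _ hne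
  rcases hne.lt_or_gt with h | h
  exacts [disjoint_itemSection h, (disjoint_itemSection h).symm]

theorem exists_mem_itemSection {m j : ℕ} (hj : j ∈ Ioc 0 (prefixSum a m)) :
    ∃ i ∈ Icc 1 m, j ∈ itemSection a i := by
  induction m with
  | zero => simp [prefixSum] at hj
  | succ m ih =>
    by_cases hjm : j ≤ prefixSum a m
    · obtain ⟨i, hi, hji⟩ := ih (mem_Ioc.2 ⟨(mem_Ioc.1 hj).1, hjm⟩)
      exact ⟨i, Icc_subset_Icc_right m.le_succ hi, hji⟩
    · refine ⟨m + 1, mem_Icc.2 ⟨by omega, le_rfl⟩, ?_⟩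
      rw [itemSection, mem_Ioc, Nat.add_sub_cancel]
      exact ⟨by omega, (mem_Ioc.1 hj).2⟩

theorem sectionDemand_ne_zero_iff {m j : ℕ} :
    sectionDemand a m j ≠ 0 ↔ ∃ i ∈ Icc 1 m, j ∈ itemSection a i ∧ j + 1 ∈ itemSection a i := by
  rw [exists_congr fun i => and_congr_right fun hi => mem_itemSection_succ_iff (mem_Icc.1 hi).1,
    sectionDemand]
  split_ifs with h
  exacts [iff_of_true one_ne_zero h, iff_of_false (not_not.2 rfl) h]

theorem sum_sectionDemand_le (m : ℕ) (s : Finset ℕ) :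
    ∑ j ∈ s, sectionDemand a m j ≤ ∑ i ∈ Icc 1 m, (a i - 1) := by
  calc ∑ j ∈ s, sectionDemand a m j
      ≤ ∑ j ∈ s,
          #{i ∈ Icc 1 m | prefixSum a (i - 1) + 1 ≤ j ∧ j + 1 ≤ prefixSum a (i - 1) + a i} := by
        refine sum_le_sum fun j _ => ?_
        rw [sectionDemand]
        split_ifs with h
        · obtain ⟨i, hi, hij⟩ := h
          exact card_pos.2 ⟨i, mem_filter.2 ⟨hi, hij⟩⟩
        · exact Nat.zero_le _
    _ = ∑ i ∈ Icc 1 m,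
          #{j ∈ s | prefixSum a (i - 1) + 1 ≤ j ∧ j + 1 ≤ prefixSum a (i - 1) + a i} := by
        simp only [card_filter]
        exact sum_comm
    _ ≤ ∑ i ∈ Icc 1 m, #(Icc (prefixSum a (i - 1) + 1) (prefixSum a (i - 1) + a i - 1)) := by
        refine sum_le_sum fun i _ => card_le_card fun j hj => ?_
        rw [mem_filter] at hj
        rw [mem_Icc]
        omega
    _ = ∑ i ∈ Icc 1 m, (a i - 1) := by
        refine sum_congr rfl fun i _ => ?_
        rw [Nat.card_Icc]
        omega

end Sections

def IsPacking (m B K : ℕ) (a g : ℕ → ℕ) : Prop :=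
  (∀ i ∈ Icc 1 m, g i ∈ Icc 1 K) ∧
    ∀ k ∈ Icc 1 K, ∑ i ∈ (Icc 1 m).filter (fun i => g i = k), a i ≤ B

def binOffset (a g : ℕ → ℕ) (i : ℕ) : ℕ := ∑ l ∈ (Ico 1 i).filter (fun l => g l = g i), a l

-- Bin `g i` becomes the block `((g i - 1) B, g i B]` of the physical line; inside it, item `i` is
-- laid out right after the items of smaller index in the same bin.
def packedSlot (a g : ℕ → ℕ) (B i : ℕ) : Finset ℕ :=
  Ioc ((g i - 1) * B + binOffset a g i) ((g i - 1) * B + binOffset a g i + a i)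

def packedPos (a g : ℕ → ℕ) (B i j : ℕ) : ℕ :=
  (g i - 1) * B + binOffset a g i + (j - prefixSum a (i - 1))

def packedLayout (a g : ℕ → ℕ) (B m j : ℕ) : ℕ :=
  ∑ i ∈ Icc 1 m, if j ∈ itemSection a i then packedPos a g B i j else 0

section Packing

variable {m B K : ℕ} {a g : ℕ → ℕ} {i j : ℕ}

theorem binOffset_add_le_sum {s : Finset ℕ} (hi : 1 ≤ i) (hs : Icc 1 i ⊆ s) :
    binOffset a g i + a i ≤ ∑ l ∈ s.filter (fun l => g l = g i), a l := by
  rw [binOffset, add_comm, ← sum_insert (by simp)]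
  refine sum_le_sum_of_subset fun l hl => ?_
  rw [mem_insert, mem_filter, mem_Ico] at hl
  rw [mem_filter]
  rcases hl with rfl | ⟨hl, hgl⟩
  · exact ⟨hs (mem_Icc.2 ⟨hi, le_rfl⟩), rfl⟩
  · exact ⟨hs (mem_Icc.2 ⟨hl.1, hl.2.le⟩), hgl⟩

theorem binOffset_add_le_binOffset {i' : ℕ} (hi : 1 ≤ i) (h : i < i') (hg : g i = g i') :
    binOffset a g i + a i ≤ binOffset a g i' := by
  have := binOffset_add_le_sum (a := a) (g := g) (s := Ico 1 i') hi
    fun l hl => by rw [mem_Icc] at hl; rw [mem_Ico]; omega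
  rwa [hg] at this

theorem IsPacking.binOffset_add_le (hg : IsPacking m B K a g) (hi : i ∈ Icc 1 m) :
    binOffset a g i + a i ≤ B :=
  (binOffset_add_le_sum (mem_Icc.1 hi).1 (Icc_subset_Icc_right (mem_Icc.1 hi).2)).trans
    (hg.2 _ (hg.1 i hi))

theorem IsPacking.packedSlot_subset (hg : IsPacking m B K a g) (hi : i ∈ Icc 1 m) :
    packedSlot a g B i ⊆ Ioc ((g i - 1) * B) ((g i - 1) * B + B) :=
  Ioc_subset_Ioc (Nat.le_add_right _ _) (by have := hg.binOffset_add_le hi; omega)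

theorem IsPacking.disjoint_packedSlot (hg : IsPacking m B K a g) {i' : ℕ} (hi : i ∈ Icc 1 m)
    (hi' : i' ∈ Icc 1 m) (h : i < i') : Disjoint (packedSlot a g B i) (packedSlot a g B i') := by
  by_cases hgi : g i = g i'
  · refine Ioc_disjoint_Ioc_of_le ?_
    have := binOffset_add_le_binOffset (a := a) (mem_Icc.1 hi).1 h hgi
    rw [hgi]
    omega
  · refine (disjoint_Ioc_mul fun h => hgi ?_).mono (hg.packedSlot_subset hi)
      (hg.packedSlot_subset hi')
    have := (mem_Icc.1 (hg.1 i hi)).1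
    have := (mem_Icc.1 (hg.1 i' hi')).1
    omega

theorem packedPos_mem_packedSlot (hi : 1 ≤ i) (hj : j ∈ itemSection a i) :
    packedPos a g B i j ∈ packedSlot a g B i := by
  rw [itemSection, mem_Ioc, ← prefixSum_pred_add a hi] at hj
  rw [packedPos, packedSlot, mem_Ioc]
  omega

theorem packedLayout_eq (hi : i ∈ Icc 1 m) (hj : j ∈ itemSection a i) :
    packedLayout a g B m j = packedPos a g B i j := by
  rw [packedLayout, sum_eq_single_of_mem i hi fun i' _ hne => if_neg ?_, if_pos hj]
  exact disjoint_left.1 (pairwiseDisjoint_itemSection Set.univ trivial trivial hne.symm) hj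

theorem IsPacking.injOn_packedLayout (hg : IsPacking m B K a g) :
    Set.InjOn (packedLayout a g B m) (Ioc 0 (prefixSum a m)) := by
  intro j hj j' hj' h
  obtain ⟨i, hi, hji⟩ := exists_mem_itemSection (mem_coe.1 hj)
  obtain ⟨i', hi', hji'⟩ := exists_mem_itemSection (mem_coe.1 hj')
  rw [packedLayout_eq hi hji, packedLayout_eq hi' hji'] at h
  have hslot := packedPos_mem_packedSlot (g := g) (B := B) (mem_Icc.1 hi).1 hji
  have hslot' := packedPos_mem_packedSlot (g := g) (B := B) (mem_Icc.1 hi').1 hji'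
  rcases lt_trichotomy i i' with hlt | rfl | hgt
  · exact (disjoint_left.1 (hg.disjoint_packedSlot hi hi' hlt) hslot (h ▸ hslot')).elim
  · rw [itemSection, mem_Ioc] at hji hji'
    rw [packedPos, packedPos] at h
    omega
  · exact (disjoint_left.1 (hg.disjoint_packedSlot hi' hi hgt) hslot' (h ▸ hslot)).elim

theorem IsPacking.mapsTo_packedLayout (hg : IsPacking m B K a g) :
    Set.MapsTo (packedLayout a g B m) (Ioc 0 (prefixSum a m)) (Set.Icc 1 (B * K)) := by
  intro j hj
  obtain ⟨i, hi, hji⟩ := exists_mem_itemSection (mem_coe.1 hj)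
  have hpos := hg.packedSlot_subset hi (packedPos_mem_packedSlot (mem_Icc.1 hi).1 hji)
  have hgK : (g i - 1) * B + B ≤ B * K := by
    have := (mem_Icc.1 (hg.1 i hi))
    rw [← Nat.succ_mul, mul_comm]
    exact Nat.mul_le_mul_left B (by omega)
  rw [packedLayout_eq hi hji, Set.mem_Icc]
  rw [mem_Ioc] at hpos
  omega

theorem packedLayout_succ (hi : i ∈ Icc 1 m) (hj : j ∈ itemSection a i)
    (hj' : j + 1 ∈ itemSection a i) :
    packedLayout a g B m (j + 1) = packedLayout a g B m j + 1 := by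
  rw [packedLayout_eq hi hj, packedLayout_eq hi hj', packedPos, packedPos]
  rw [itemSection, mem_Ioc] at hj
  omega

theorem IsPacking.not_dvd_packedLayout (hg : IsPacking m B K a g) (hi : i ∈ Icc 1 m)
    (hj : j ∈ itemSection a i) (hj' : j + 1 ∈ itemSection a i) :
    ¬B ∣ packedLayout a g B m j := by
  have hpos := hg.packedSlot_subset hi (packedPos_mem_packedSlot (mem_Icc.1 hi).1 hj)
  have hpos' := hg.packedSlot_subset hi (packedPos_mem_packedSlot (mem_Icc.1 hi).1 hj')
  rw [← packedLayout_eq (B := B) hi hj, mem_Ioc] at hpos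
  rw [← packedLayout_eq (B := B) hi hj', packedLayout_succ hi hj hj', mem_Ioc] at hpos'
  exact Nat.not_dvd_of_lt_of_lt_mul_succ (by rw [mul_comm]; exact hpos.1)
    (by rw [mul_add_one, mul_comm]; omega)

theorem IsPacking.exists_embedding (hg : IsPacking m B K a g) (hsum : prefixSum a m ≤ B * K) :
    ∃ f, Set.BijOn f (Set.Icc 1 (B * K)) (Set.Icc 1 (B * K)) ∧ ∀ k ∈ Icc 1 (B * K - 1),
      lineLoad (B * K) (sectionDemand a m) f k ≤
        if B ∣ k then 0 else ∑ i ∈ Icc 1 m, (a i - 1) := by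
  have hsub : (Ioc 0 (prefixSum a m) : Set ℕ) ⊆ Set.Icc 1 (B * K) := fun j hj => by
    rw [mem_coe, mem_Ioc] at hj
    exact ⟨hj.1, hj.2.trans hsum⟩
  obtain ⟨f, hbij, hf⟩ := hg.injOn_packedLayout.exists_bijOn_extend (Set.finite_Icc _ _) hsub
    hg.mapsTo_packedLayout
  refine ⟨f, hbij, fun k _ => ?_⟩
  split_ifs with hBk
  · refine (lineLoad_eq_zero_iff.2 fun j _ hw hcross => ?_).le
    obtain ⟨i, hi, hj, hj'⟩ := sectionDemand_ne_zero_iff.1 hw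
    have hmem := itemSection_subset (a := a) (mem_Icc.1 hi).2
    rw [hf (hmem hj), hf (hmem hj'), packedLayout_succ hi hj hj'] at hcross
    have hk : k = packedLayout a g B m j := by omega
    exact hg.not_dvd_packedLayout hi hj hj' (hk ▸ hBk)
  · exact lineLoad_le_sum.trans (sum_sectionDemand_le m _)

end Packing

section Unpacking

variable {m B K : ℕ} {a f : ℕ → ℕ}

theorem pred_div_eq_on_itemSection (hsum : prefixSum a m ≤ B * K)
    (hmaps : Set.MapsTo f (Set.Icc 1 (B * K)) (Set.Icc 1 (B * K)))
    (hcut : ∀ k ∈ Icc 1 (B * K - 1), B ∣ k → lineLoad (B * K) (sectionDemand a m) f k = 0)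
    {i j : ℕ} (hi : i ∈ Icc 1 m) (hj : j ∈ itemSection a i) :
    (f j - 1) / B = (f (prefixSum a (i - 1) + 1) - 1) / B := by
  have hiN : prefixSum a i ≤ B * K := (prefixSum_mono a (mem_Icc.1 hi).2).trans hsum
  rw [itemSection, mem_Ioc] at hj
  obtain ⟨hj, hji⟩ := hj
  induction j, hj using Nat.le_induction with
  | base => rfl
  | succ j hj ih =>
    have hw : sectionDemand a m j ≠ 0 := sectionDemand_ne_zero_iff.2
      ⟨i, hi, by rw [itemSection, mem_Ioc]; omega, by rw [itemSection, mem_Ioc]; omega⟩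
    rw [← ih (by omega)]
    refine (pred_div_eq_of_lineLoad_eq_zero hcut ?_ hw (hmaps ?_) (hmaps ?_)).symm <;>
      simp only [mem_Icc, Set.mem_Icc] <;> omega

theorem isPacking_of_embedding (hB : 1 ≤ B) (ha : ∀ i ∈ Icc 1 m, 1 ≤ a i)
    (hsum : prefixSum a m ≤ B * K) (hmaps : Set.MapsTo f (Set.Icc 1 (B * K)) (Set.Icc 1 (B * K)))
    (hinj : Set.InjOn f (Set.Icc 1 (B * K)))
    (hcut : ∀ k ∈ Icc 1 (B * K - 1), B ∣ k → lineLoad (B * K) (sectionDemand a m) f k = 0) :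
    IsPacking m B K a fun i => (f (prefixSum a (i - 1) + 1) - 1) / B + 1 := by
  have hsub : ∀ i ∈ Icc 1 m, (itemSection a i : Set ℕ) ⊆ Set.Icc 1 (B * K) := fun i hi =>
    coe_itemSection_subset_Icc (mem_Icc.1 hi).2 hsum
  constructor
  · intro i hi
    have hfirst : prefixSum a (i - 1) + 1 ∈ itemSection a i := by
      rw [itemSection, mem_Ioc, ← prefixSum_pred_add a (mem_Icc.1 hi).1]
      have := ha i hi
      omega
    have := hmaps (hsub i hi hfirst)
    rw [Set.mem_Icc] at this
    refine mem_Icc.2 ⟨Nat.le_add_left _ _, Nat.add_one_le_iff.2 ((Nat.div_lt_iff_lt_mul hB).2 ?_)⟩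
    rw [mul_comm]
    omega
  · intro k hk
    set S := (Icc 1 m).filter fun i => (f (prefixSum a (i - 1) + 1) - 1) / B + 1 = k
    have hST : ∀ i ∈ S, i ∈ Icc 1 m := fun i hi => (mem_filter.1 hi).1
    have himage : (S.biUnion (itemSection a)).image f ⊆ Ioc ((k - 1) * B) ((k - 1) * B + B) := by
      intro x hx
      obtain ⟨j, hj, rfl⟩ := mem_image.1 hx
      obtain ⟨i, hiS, hji⟩ := mem_biUnion.1 hj
      refine mem_Ioc_of_pred_div_eq hB (hmaps (hsub i (hST i hiS) hji)).1 ?_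
      rw [pred_div_eq_on_itemSection hsum hmaps hcut (hST i hiS) hji, ← (mem_filter.1 hiS).2]
      rfl
    calc ∑ i ∈ S, a i = ∑ i ∈ S, #(itemSection a i) :=
          sum_congr rfl fun i hi => (card_itemSection (mem_Icc.1 (hST i hi)).1).symm
      _ = #((S.biUnion (itemSection a)).image f) := by
          rw [card_image_of_injOn, card_biUnion (pairwiseDisjoint_itemSection _)]
          refine hinj.mono fun j hj => ?_
          obtain ⟨i, hiS, hji⟩ := mem_biUnion.1 (mem_coe.1 hj)
          exact hsub i (hST i hiS) hji
      _ ≤ B := by simpa using card_le_card himage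

end Unpacking

theorem binPacking_iff_line_on_line_cVNE_general (m B K : ℕ) (hB : 1 ≤ B)
    (a : ℕ → ℕ) (ha : ∀ i ∈ Finset.Icc 1 m, 1 ≤ a i)
    (hsum : ∑ i ∈ Finset.Icc 1 m, a i ≤ B * K) :
    (∃ g : ℕ → ℕ, (∀ i ∈ Finset.Icc 1 m, g i ∈ Finset.Icc 1 K) ∧
        ∀ k ∈ Finset.Icc 1 K,
          ∑ i ∈ (Finset.Icc 1 m).filter (fun i => g i = k), a i ≤ B) ↔
    (∃ f : ℕ → ℕ, Set.BijOn f (Set.Icc 1 (B * K)) (Set.Icc 1 (B * K)) ∧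
      ∀ k ∈ Finset.Icc 1 (B * K - 1),
        (∑ j ∈ Finset.Icc 1 (B * K - 1),
          if (min (f j) (f (j + 1)) ≤ k ∧ k < max (f j) (f (j + 1))) then
            (if ∃ i ∈ Finset.Icc 1 m,
                (∑ l ∈ Finset.Icc 1 (i - 1), a l) + 1 ≤ j ∧
                j + 1 ≤ (∑ l ∈ Finset.Icc 1 (i - 1), a l) + a i
             then 1 else 0)
          else 0) ≤
        (if B ∣ k then 0 else ∑ i ∈ Finset.Icc 1 m, (a i - 1))) := by
  constructor
  · rintro ⟨g, hg⟩
    exact IsPacking.exists_embedding (g := g) hg hsum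
  · rintro ⟨f, hf, hcap⟩
    refine ⟨_, isPacking_of_embedding hB ha hsum hf.mapsTo hf.injOn fun k hk hBk => ?_⟩
    have := hcap k hk
    rw [if_pos hBk] at this
    exact Nat.le_zero.1 this

/-- cVNE of a linear virtual network on a linear physical network is
NP-complete: correctness of the reduction from bin packing.  With `N = B·K` and
`M = ∑ (aᵢ − 1)`, the virtual edge `{j, j+1}` has demand `1` iff `j, j+1` lie in the
same element section, and the physical edge `{k, k+1}` has capacity `0` if `B ∣ k`
and `M` otherwise.  The instance of bin packing is solvable iff there is a
capacity-feasible bijection of `{1,…,N}`. -/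
theorem binPacking_iff_line_on_line_cVNE (m B K : ℕ) (hm : 1 ≤ m) (hB : 1 ≤ B)
    (hK : 1 ≤ K) (a : ℕ → ℕ) (ha : ∀ i ∈ Finset.Icc 1 m, 1 ≤ a i)
    (hsum : ∑ i ∈ Finset.Icc 1 m, a i ≤ B * K) :
    (∃ g : ℕ → ℕ, (∀ i ∈ Finset.Icc 1 m, g i ∈ Finset.Icc 1 K) ∧
        ∀ k ∈ Finset.Icc 1 K,
          ∑ i ∈ (Finset.Icc 1 m).filter (fun i => g i = k), a i ≤ B) ↔
    (∃ f : ℕ → ℕ, Set.BijOn f (Set.Icc 1 (B * K)) (Set.Icc 1 (B * K)) ∧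
      ∀ k ∈ Finset.Icc 1 (B * K - 1),
        (∑ j ∈ Finset.Icc 1 (B * K - 1),
          if (min (f j) (f (j + 1)) ≤ k ∧ k < max (f j) (f (j + 1))) then
            (if ∃ i ∈ Finset.Icc 1 m,
                (∑ l ∈ Finset.Icc 1 (i - 1), a l) + 1 ≤ j ∧
                j + 1 ≤ (∑ l ∈ Finset.Icc 1 (i - 1), a l) + a i
             then 1 else 0)
          else 0) ≤
        (if B ∣ k then 0 else ∑ i ∈ Finset.Icc 1 m, (a i - 1))) :=
  binPacking_iff_line_on_line_cVNE_general m B K hB a ha hsum
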